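/- arXiv:1811.10303 — 4 statements merged into one kernel-verified Lean document; each statement's English description precedes it below -/
import Mathlib

section
/- The Bianchi I metric g = -dt² + a(t)² dz² + b(t)²(dr² + r² dφ²) with a(t) = (α-t)^{-1/3}(β-t) and b(t) = (α-t)^{2/3} is a solution of the Einstein equations with dust source: its Einstein tensor satisfies G_{ab} = ρ u_a u_b for some nonnegative function ρ (on the region 0 ≤ t < min{α,β}), where u = ∂_t. -/
noncomputable section

namespace BianchiIDust

/-- Points of the spacetime, in coordinates `x = (t, r, φ, z)`. -/
abbrev Pt := Fin 4 → ℝ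

/-- Metric: a matrix-valued function of the point. -/
abbrev Metric := Pt → Matrix (Fin 4) (Fin 4) ℝ

/-- Partial derivative `∂ᵢ f` of a scalar function. -/
def pd (i : Fin 4) (f : Pt → ℝ) (x : Pt) : ℝ := fderiv ℝ f x (Pi.single i 1)

/-- Inverse metric `g^{ab}`. -/
def ginv (g : Metric) (x : Pt) : Matrix (Fin 4) (Fin 4) ℝ := (g x)⁻¹

/-- Christoffel symbols `Γ^a_{bc}` of the Levi-Civita connection of `g`. -/
def christoffel (g : Metric) (x : Pt) (a b c : Fin 4) : ℝ :=
  (1 / 2) * ∑ d, ginv g x a d *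
    (pd b (fun y => g y d c) x + pd c (fun y => g y d b) x - pd d (fun y => g y b c) x)

/-- Riemann curvature tensor `R^a_{bcd}`. -/
def riemann (g : Metric) (x : Pt) (a b c d : Fin 4) : ℝ :=
  pd c (fun y => christoffel g y a d b) x - pd d (fun y => christoffel g y a c b) x
    + ∑ e, (christoffel g x a c e * christoffel g x e d b
      - christoffel g x a d e * christoffel g x e c b)

/-- Ricci tensor `R_{bd} = R^a_{bad}`. -/
def ricci (g : Metric) (x : Pt) (b d : Fin 4) : ℝ := ∑ a, riemann g x a b a d

/-- Scalar curvature `R = g^{bd} R_{bd}`. -/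
def scalarCurv (g : Metric) (x : Pt) : ℝ := ∑ b, ∑ d, ginv g x b d * ricci g x b d

/-- Einstein tensor `G_{ab} = R_{ab} - (1/2) R g_{ab}`. -/
def einstein (g : Metric) (x : Pt) : Matrix (Fin 4) (Fin 4) ℝ :=
  Matrix.of fun a b => ricci g x a b - (1 / 2) * scalarCurv g x * g x a b

/-- The scale factor `a(t) = (α-t)^{-1/3}(β-t)`. -/
def aBI (α β t : ℝ) : ℝ := (α - t) ^ (-(1 : ℝ) / 3) * (β - t)

/-- The scale factor `b(t) = (α-t)^{2/3}`. -/
def bBI (α t : ℝ) : ℝ := (α - t) ^ ((2 : ℝ) / 3)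

/-- The Bianchi I metric `g = -dt² + a(t)² dz² + b(t)²(dr² + r² dφ²)`, in
cylindrical coordinates `(t, r, φ, z)`. -/
def gBianchiI (α β : ℝ) : Metric := fun x =>
  Matrix.diagonal ![-1, bBI α (x 0) ^ 2, bBI α (x 0) ^ 2 * (x 1) ^ 2, aBI α β (x 0) ^ 2]

/-- The unit timelike covector `u_a` corresponding to `u = ∂_t`. -/
def uCov : Fin 4 → ℝ := ![-1, 0, 0, 0]

/-!
The metric `-dt² + b(t)² (dr² + r² dφ²) + a(t)² dz²` has the Einstein tensor of an anisotropic
fluid at rest, `G = diag(ρ, b² p⊥, b² r² p⊥, a² p_z)`, with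
`ρ = (b'/b)² + 2a'b'/(ab)`, `p⊥ = -(a''/a + b''/b + a'b'/(ab))` and `p_z = -(2b''/b + (b'/b)²)`;
this is a direct computation from the Christoffel symbols, which involve only `t` and `r`.
It is a dust solution exactly when both pressures vanish. For the given scale factors all
exponents are multiples of `1/3`, so with `c = (α - t)^{1/3}` one has `b = c²` and
`a = (β - t)/c`; in these terms both pressures vanish identically and
`ρ = 4 / (3 (α - t) (β - t))`, which is positive for `t < min α β`.
-/

variable {x : Pt}

theorem pd_const (i : Fin 4) (k : ℝ) : pd i (fun _ => k) x = 0 := by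
  simp [pd]

theorem pd_congr_of_eqOn {O : Set Pt} {f h : Pt → ℝ} (hO : IsOpen O) (hx : x ∈ O)
    (hfh : Set.EqOn f h O) (i : Fin 4) : pd i f x = pd i h x := by
  rw [pd, pd, (Filter.eventuallyEq_of_mem (hO.mem_nhds hx) hfh).fderiv_eq]

theorem pd_mul_comp_apply {F G : ℝ → ℝ} {F' G' : ℝ} {j k : Fin 4} (hF : HasDerivAt F F' (x j))
    (hG : HasDerivAt G G' (x k)) (i : Fin 4) :
    pd i (fun y => F (y j) * G (y k)) x =
      (if i = j then F' else 0) * G (x k) + F (x j) * (if i = k then G' else 0) := by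
  have hFj : HasFDerivAt (fun y : Pt => F (y j)) _ x :=
    hF.hasFDerivAt.comp x (hasFDerivAt_apply (𝕜 := ℝ) j x)
  have hGk : HasFDerivAt (fun y : Pt => G (y k)) _ x :=
    hG.hasFDerivAt.comp x (hasFDerivAt_apply (𝕜 := ℝ) k x)
  rw [pd, (hFj.fun_mul hGk).fderiv]
  by_cases h : i = j <;> by_cases h' : i = k <;> subst_vars <;> simp [*] <;> ring

theorem pd_comp_apply {F : ℝ → ℝ} {F' : ℝ} {j : Fin 4} (hF : HasDerivAt F F' (x j)) (i : Fin 4) :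
    pd i (fun y => F (y j)) x = if i = j then F' else 0 := by
  simpa using pd_mul_comp_apply hF (hasDerivAt_const (x j) 1) i

theorem hasDerivAt_mul_deriv {f f' f'' : ℝ → ℝ} {t : ℝ} (hf : HasDerivAt f (f' t) t)
    (hf' : HasDerivAt f' (f'' t) t) :
    HasDerivAt (fun s => f s * f' s) (f' t ^ 2 + f t * f'' t) t :=
  (hf.mul hf').congr_deriv (by ring)

theorem hasDerivAt_deriv_div {f f' f'' : ℝ → ℝ} {t : ℝ} (hf : HasDerivAt f (f' t) t)
    (hf' : HasDerivAt f' (f'' t) t) (h0 : f t ≠ 0) :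
    HasDerivAt (fun s => f' s / f s) (f'' t / f t - (f' t / f t) ^ 2) t :=
  (hf'.div hf h0).congr_deriv (by field_simp)

def coordRegion (T : Set ℝ) : Set Pt := {y | y 0 ∈ T ∧ 0 < y 1}

theorem isOpen_coordRegion {T : Set ℝ} (hT : IsOpen T) : IsOpen (coordRegion T) :=
  (hT.preimage (continuous_apply 0)).inter (isOpen_lt continuous_const (continuous_apply 1))

structure IsScaleFactorOn (T : Set ℝ) (f f' f'' : ℝ → ℝ) : Prop where
  ne_zero : ∀ t ∈ T, f t ≠ 0
  hasDerivAt : ∀ t ∈ T, HasDerivAt f (f' t) t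
  hasDerivAt_deriv : ∀ t ∈ T, HasDerivAt f' (f'' t) t

theorem IsScaleFactorOn.mono {T S : Set ℝ} {f f' f'' : ℝ → ℝ} (hf : IsScaleFactorOn T f f' f'')
    (hST : S ⊆ T) : IsScaleFactorOn S f f' f'' :=
  ⟨fun t ht => hf.ne_zero t (hST ht), fun t ht => hf.hasDerivAt t (hST ht),
    fun t ht => hf.hasDerivAt_deriv t (hST ht)⟩

def bianchiIMetric (a b : ℝ → ℝ) : Metric := fun y =>
  Matrix.diagonal ![-1, b (y 0) ^ 2, b (y 0) ^ 2 * y 1 ^ 2, a (y 0) ^ 2]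

theorem gBianchiI_eq (α β : ℝ) : gBianchiI α β = bianchiIMetric (aBI α β) (bBI α) := rfl

def bianchiIChristoffel (a b a' b' : ℝ → ℝ) (t r : ℝ) (j k l : Fin 4) : ℝ :=
  if j = 0 ∧ k = 1 ∧ l = 1 then b t * b' t
  else if j = 0 ∧ k = 2 ∧ l = 2 then b t * b' t * r ^ 2
  else if j = 0 ∧ k = 3 ∧ l = 3 then a t * a' t
  else if (j = 1 ∧ k = 0 ∧ l = 1) ∨ (j = 1 ∧ k = 1 ∧ l = 0) ∨ (j = 2 ∧ k = 0 ∧ l = 2)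
    ∨ (j = 2 ∧ k = 2 ∧ l = 0) then b' t / b t
  else if j = 1 ∧ k = 2 ∧ l = 2 then -r
  else if (j = 2 ∧ k = 1 ∧ l = 2) ∨ (j = 2 ∧ k = 2 ∧ l = 1) then r⁻¹
  else if (j = 3 ∧ k = 0 ∧ l = 3) ∨ (j = 3 ∧ k = 3 ∧ l = 0) then a' t / a t
  else 0

/-- `∂_i Γ^j_{kl}` for `Γ = bianchiIChristoffel`. -/
def bianchiIChristoffelDeriv (a b a' b' a'' b'' : ℝ → ℝ) (t r : ℝ) (i j k l : Fin 4) : ℝ :=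
  if i = 0 ∧ j = 0 ∧ k = 1 ∧ l = 1 then b' t ^ 2 + b t * b'' t
  else if i = 0 ∧ j = 0 ∧ k = 2 ∧ l = 2 then (b' t ^ 2 + b t * b'' t) * r ^ 2
  else if i = 1 ∧ j = 0 ∧ k = 2 ∧ l = 2 then b t * b' t * (2 * r)
  else if i = 0 ∧ j = 0 ∧ k = 3 ∧ l = 3 then a' t ^ 2 + a t * a'' t
  else if i = 0 ∧ ((j = 1 ∧ k = 0 ∧ l = 1) ∨ (j = 1 ∧ k = 1 ∧ l = 0) ∨ (j = 2 ∧ k = 0 ∧ l = 2)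
    ∨ (j = 2 ∧ k = 2 ∧ l = 0)) then b'' t / b t - (b' t / b t) ^ 2
  else if i = 1 ∧ j = 1 ∧ k = 2 ∧ l = 2 then -1
  else if i = 1 ∧ ((j = 2 ∧ k = 1 ∧ l = 2) ∨ (j = 2 ∧ k = 2 ∧ l = 1)) then -(r ^ 2)⁻¹
  else if i = 0 ∧ ((j = 3 ∧ k = 0 ∧ l = 3) ∨ (j = 3 ∧ k = 3 ∧ l = 0)) then
    a'' t / a t - (a' t / a t) ^ 2
  else 0

def energyDensity (a b a' b' : ℝ → ℝ) (t : ℝ) : ℝ :=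
  (b' t / b t) ^ 2 + 2 * a' t * b' t / (a t * b t)

def transversePressure (a b a' b' a'' b'' : ℝ → ℝ) (t : ℝ) : ℝ :=
  -(a'' t / a t + b'' t / b t + a' t * b' t / (a t * b t))

def axialPressure (b b' b'' : ℝ → ℝ) (t : ℝ) : ℝ :=
  -(2 * b'' t / b t + (b' t / b t) ^ 2)

section BianchiI

variable {a b a' b' a'' b'' : ℝ → ℝ} {T : Set ℝ}

theorem ginv_bianchiIMetric (ha : a (x 0) ≠ 0) (hb : b (x 0) ≠ 0) (hr : x 1 ≠ 0) :
    ginv (bianchiIMetric a b) x = Matrix.diagonal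
      ![-1, (b (x 0) ^ 2)⁻¹, (b (x 0) ^ 2 * x 1 ^ 2)⁻¹, (a (x 0) ^ 2)⁻¹] := by
  apply Matrix.inv_eq_right_inv
  rw [bianchiIMetric, Matrix.diagonal_mul_diagonal, ← Matrix.diagonal_one]
  congr 1
  ext j
  fin_cases j <;> simp [ha, hb]
  field_simp

theorem pd_bianchiIMetric (ha : HasDerivAt a (a' (x 0)) (x 0))
    (hb : HasDerivAt b (b' (x 0)) (x 0)) (i j k : Fin 4) :
    pd i (fun y => bianchiIMetric a b y j k) x = Matrix.diagonal
      ![0, if i = 0 then 2 * b (x 0) * b' (x 0) else 0,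
        (if i = 0 then 2 * b (x 0) * b' (x 0) else 0) * x 1 ^ 2
          + b (x 0) ^ 2 * (if i = 1 then 2 * x 1 else 0),
        if i = 0 then 2 * a (x 0) * a' (x 0) else 0] j k := by
  have ha2 : HasDerivAt (fun t => a t ^ 2) (2 * a (x 0) * a' (x 0)) (x 0) := by
    simpa using ha.fun_pow 2
  have hb2 : HasDerivAt (fun t => b t ^ 2) (2 * b (x 0) * b' (x 0)) (x 0) := by
    simpa using hb.fun_pow 2
  have hr2 : HasDerivAt (fun r => r ^ 2) (2 * x 1) (x 1) := by
    simpa using hasDerivAt_pow 2 (x 1)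
  fin_cases j <;> fin_cases k <;>
    simp [bianchiIMetric, pd_const, pd_comp_apply ha2, pd_comp_apply hb2,
      pd_mul_comp_apply hb2 hr2]

theorem christoffel_bianchiIMetric (ha : HasDerivAt a (a' (x 0)) (x 0))
    (hb : HasDerivAt b (b' (x 0)) (x 0)) (ha0 : a (x 0) ≠ 0) (hb0 : b (x 0) ≠ 0)
    (hr : x 1 ≠ 0) (j k l : Fin 4) :
    christoffel (bianchiIMetric a b) x j k l =
      bianchiIChristoffel a b a' b' (x 0) (x 1) j k l := by
  simp only [christoffel, ginv_bianchiIMetric ha0 hb0 hr, pd_bianchiIMetric ha hb,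
    Matrix.diagonal_apply, ite_mul, zero_mul, Finset.sum_ite_eq, Finset.mem_univ, if_true]
  fin_cases j <;> fin_cases k <;> fin_cases l <;> simp [bianchiIChristoffel] <;> field_simp

theorem christoffel_bianchiIMetric_of_mem (ha : IsScaleFactorOn T a a' a'')
    (hb : IsScaleFactorOn T b b' b'') (hx : x ∈ coordRegion T) (j k l : Fin 4) :
    christoffel (bianchiIMetric a b) x j k l = bianchiIChristoffel a b a' b' (x 0) (x 1) j k l :=
  christoffel_bianchiIMetric (ha.hasDerivAt _ hx.1) (hb.hasDerivAt _ hx.1) (ha.ne_zero _ hx.1)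
    (hb.ne_zero _ hx.1) hx.2.ne' j k l

theorem pd_christoffel_bianchiIMetric (hT : IsOpen T) (ha : IsScaleFactorOn T a a' a'')
    (hb : IsScaleFactorOn T b b' b'') (hx : x ∈ coordRegion T) (i j k l : Fin 4) :
    pd i (fun y => christoffel (bianchiIMetric a b) y j k l) x =
      bianchiIChristoffelDeriv a b a' b' a'' b'' (x 0) (x 1) i j k l := by
  rw [pd_congr_of_eqOn (isOpen_coordRegion hT) hx
    (fun y hy => christoffel_bianchiIMetric_of_mem ha hb hy j k l)]
  obtain ⟨ht, hr⟩ := hx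
  have hb' := hb.hasDerivAt _ ht
  have hb'' := hb.hasDerivAt_deriv _ ht
  have ha' := ha.hasDerivAt _ ht
  have ha'' := ha.hasDerivAt_deriv _ ht
  have hr2 : HasDerivAt (fun r => r ^ 2) (2 * x 1) (x 1) := by
    simpa using hasDerivAt_pow 2 (x 1)
  have e₁ : ∀ i, pd i (fun y => b (y 0) * b' (y 0)) x = _ :=
    pd_comp_apply (hasDerivAt_mul_deriv hb' hb'')
  have e₂ : ∀ i, pd i (fun y => a (y 0) * a' (y 0)) x = _ :=
    pd_comp_apply (hasDerivAt_mul_deriv ha' ha'')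
  have e₃ : ∀ i, pd i (fun y => b (y 0) * b' (y 0) * y 1 ^ 2) x = _ :=
    pd_mul_comp_apply (hasDerivAt_mul_deriv hb' hb'') hr2
  have e₄ : ∀ i, pd i (fun y => b' (y 0) / b (y 0)) x = _ :=
    pd_comp_apply (hasDerivAt_deriv_div hb' hb'' (hb.ne_zero _ ht))
  have e₅ : ∀ i, pd i (fun y => a' (y 0) / a (y 0)) x = _ :=
    pd_comp_apply (hasDerivAt_deriv_div ha' ha'' (ha.ne_zero _ ht))
  have e₆ : ∀ i, pd i (fun y => -y 1) x = _ := pd_comp_apply (hasDerivAt_neg (x 1))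
  have e₇ : ∀ i, pd i (fun y => (y 1)⁻¹) x = _ := pd_comp_apply (hasDerivAt_inv hr.ne')
  fin_cases j <;> fin_cases k <;> fin_cases l <;>
    simp [bianchiIChristoffel, bianchiIChristoffelDeriv, pd_const, e₁, e₂, e₃, e₄, e₅, e₆, e₇]
  -- the case `Γ⁰₂₂ = b b' r²`, the only symbol depending on both `t` and `r`
  split_ifs <;> simp_all

theorem ricci_bianchiIMetric (hT : IsOpen T) (ha : IsScaleFactorOn T a a' a'')
    (hb : IsScaleFactorOn T b b' b'') (hx : x ∈ coordRegion T) (j k : Fin 4) :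
    ricci (bianchiIMetric a b) x j k = Matrix.diagonal
      ![-(2 * b'' (x 0) / b (x 0) + a'' (x 0) / a (x 0)),
        b (x 0) * b'' (x 0) + b' (x 0) ^ 2 + b (x 0) * b' (x 0) * a' (x 0) / a (x 0),
        (b (x 0) * b'' (x 0) + b' (x 0) ^ 2 + b (x 0) * b' (x 0) * a' (x 0) / a (x 0)) * x 1 ^ 2,
        a (x 0) * a'' (x 0) + 2 * a (x 0) * a' (x 0) * b' (x 0) / b (x 0)] j k := by
  have ha0 := ha.ne_zero _ hx.1
  have hb0 := hb.ne_zero _ hx.1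
  have hr := hx.2.ne'
  simp only [ricci, riemann, Fin.sum_univ_four, pd_christoffel_bianchiIMetric hT ha hb hx,
    christoffel_bianchiIMetric_of_mem ha hb hx]
  fin_cases j <;> fin_cases k <;> simp [bianchiIChristoffel, bianchiIChristoffelDeriv] <;>
    field_simp <;> ring

theorem scalarCurv_bianchiIMetric (hT : IsOpen T) (ha : IsScaleFactorOn T a a' a'')
    (hb : IsScaleFactorOn T b b' b'') (hx : x ∈ coordRegion T) :
    scalarCurv (bianchiIMetric a b) x =
      2 * a'' (x 0) / a (x 0) + 4 * b'' (x 0) / b (x 0) + 2 * (b' (x 0) / b (x 0)) ^ 2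
        + 4 * a' (x 0) * b' (x 0) / (a (x 0) * b (x 0)) := by
  have ha0 := ha.ne_zero _ hx.1
  have hb0 := hb.ne_zero _ hx.1
  have hr := hx.2.ne'
  simp only [scalarCurv, ginv_bianchiIMetric ha0 hb0 hr, ricci_bianchiIMetric hT ha hb hx,
    Fin.sum_univ_four]
  simp
  field_simp
  ring

theorem einstein_bianchiIMetric (hT : IsOpen T) (ha : IsScaleFactorOn T a a' a'')
    (hb : IsScaleFactorOn T b b' b'') (hx : x ∈ coordRegion T) :
    einstein (bianchiIMetric a b) x = Matrix.diagonal
      ![energyDensity a b a' b' (x 0),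
        b (x 0) ^ 2 * transversePressure a b a' b' a'' b'' (x 0),
        b (x 0) ^ 2 * x 1 ^ 2 * transversePressure a b a' b' a'' b'' (x 0),
        a (x 0) ^ 2 * axialPressure b b' b'' (x 0)] := by
  have ha0 := ha.ne_zero _ hx.1
  have hb0 := hb.ne_zero _ hx.1
  ext j k
  simp only [einstein, Matrix.of_apply, ricci_bianchiIMetric hT ha hb hx,
    scalarCurv_bianchiIMetric hT ha hb hx]
  fin_cases j <;> fin_cases k <;>
    simp [bianchiIMetric, energyDensity, transversePressure, axialPressure] <;> field_simp <;> ring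

theorem einstein_bianchiIMetric_eq_dust (hT : IsOpen T) (ha : IsScaleFactorOn T a a' a'')
    (hb : IsScaleFactorOn T b b' b'') (hx : x ∈ coordRegion T)
    (htrans : transversePressure a b a' b' a'' b'' (x 0) = 0)
    (haxial : axialPressure b b' b'' (x 0) = 0) :
    einstein (bianchiIMetric a b) x =
      energyDensity a b a' b' (x 0) • Matrix.vecMulVec uCov uCov := by
  rw [einstein_bianchiIMetric hT ha hb hx, htrans, haxial]
  ext j k
  fin_cases j <;> fin_cases k <;> simp [uCov]

end BianchiI

def cbrtSub (α t : ℝ) : ℝ := (α - t) ^ ((1 : ℝ) / 3)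

def bBI' (α t : ℝ) : ℝ := -2 / (3 * cbrtSub α t)

def bBI'' (α t : ℝ) : ℝ := -2 / (9 * cbrtSub α t ^ 4)

def aBI' (α β t : ℝ) : ℝ := -1 / cbrtSub α t + (β - t) / (3 * cbrtSub α t ^ 4)

def aBI'' (α β t : ℝ) : ℝ := -2 / (3 * cbrtSub α t ^ 4) + 4 * (β - t) / (9 * cbrtSub α t ^ 7)

section ScaleFactors

variable {α β t : ℝ}

theorem cbrtSub_pos (ht : t < α) : 0 < cbrtSub α t :=
  Real.rpow_pos_of_pos (sub_pos.2 ht) _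

theorem cbrtSub_pow (ht : t < α) (n : ℕ) : cbrtSub α t ^ n = (α - t) ^ ((n : ℝ) / 3) := by
  rw [cbrtSub, ← Real.rpow_natCast, ← Real.rpow_mul (sub_pos.2 ht).le]
  ring_nf

theorem cbrtSub_cube (ht : t < α) : cbrtSub α t ^ 3 = α - t := by
  simp [cbrtSub_pow ht 3]

theorem bBI_eq (ht : t < α) : bBI α t = cbrtSub α t ^ 2 := by
  rw [cbrtSub_pow ht 2, bBI]
  norm_num

theorem aBI_eq (ht : t < α) : aBI α β t = (β - t) / cbrtSub α t := by
  rw [aBI, cbrtSub, neg_div, Real.rpow_neg (sub_pos.2 ht).le]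
  ring

theorem hasDerivAt_cbrtSub (ht : t < α) :
    HasDerivAt (cbrtSub α) (-1 / (3 * cbrtSub α t ^ 2)) t := by
  have h := ((Real.hasDerivAt_rpow_const (p := 1 / 3) (Or.inl (sub_pos.2 ht).ne')).comp t
    ((hasDerivAt_id t).const_sub α))
  refine h.congr_deriv ?_
  have hc := (cbrtSub_pos ht).ne'
  rw [cbrtSub_pow ht 2, show (1 : ℝ) / 3 - 1 = -(2 / 3) by norm_num,
    Real.rpow_neg (sub_pos.2 ht).le]
  push_cast
  field_simp

theorem isScaleFactorOn_bBI : IsScaleFactorOn (Set.Iio α) (bBI α) (bBI' α) (bBI'' α) where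
  ne_zero t ht := by
    rw [bBI_eq ht]
    exact pow_ne_zero 2 (cbrtSub_pos ht).ne'
  hasDerivAt t ht := by
    have hc := (cbrtSub_pos ht).ne'
    refine (((hasDerivAt_cbrtSub ht).fun_pow 2).congr_of_eventuallyEq ?_).congr_deriv ?_
    · filter_upwards [Iio_mem_nhds ht] with s hs using bBI_eq hs
    · rw [bBI']
      field_simp
      ring
  hasDerivAt_deriv t ht := by
    have hc := (cbrtSub_pos ht).ne'
    have h := (hasDerivAt_const t (-2 : ℝ)).fun_div ((hasDerivAt_cbrtSub ht).const_mul 3)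
      (by positivity)
    refine h.congr_deriv ?_
    rw [bBI'']
    field_simp
    ring

theorem isScaleFactorOn_aBI :
    IsScaleFactorOn (Set.Iio (min α β)) (aBI α β) (aBI' α β) (aBI'' α β) where
  ne_zero t ht := by
    obtain ⟨htα, htβ⟩ := lt_min_iff.1 (Set.mem_Iio.1 ht)
    rw [aBI_eq htα]
    exact div_ne_zero (sub_pos.2 htβ).ne' (cbrtSub_pos htα).ne'
  hasDerivAt t ht := by
    have htα := (lt_min_iff.1 (Set.mem_Iio.1 ht)).1
    have hc := (cbrtSub_pos htα).ne'
    have h := ((hasDerivAt_id' t).const_sub β).fun_div (hasDerivAt_cbrtSub htα) hc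
    refine (h.congr_of_eventuallyEq ?_).congr_deriv ?_
    · filter_upwards [Iio_mem_nhds htα] with s hs using aBI_eq hs
    · rw [aBI']
      field_simp
      ring
  hasDerivAt_deriv t ht := by
    have htα := (lt_min_iff.1 (Set.mem_Iio.1 ht)).1
    have hc := (cbrtSub_pos htα).ne'
    have hc' := hasDerivAt_cbrtSub htα
    have h := ((hasDerivAt_const t (-1 : ℝ)).fun_div hc' hc).fun_add
      (((hasDerivAt_id' t).const_sub β).fun_div ((hc'.fun_pow 4).const_mul 3) (by positivity))
    refine h.congr_deriv ?_
    rw [aBI'']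
    field_simp
    ring

theorem transversePressure_bianchiI (htα : t < α) (htβ : t < β) :
    transversePressure (aBI α β) (bBI α) (aBI' α β) (bBI' α) (aBI'' α β) (bBI'' α) t = 0 := by
  have hc := (cbrtSub_pos htα).ne'
  have hw := (sub_pos.2 htβ).ne'
  rw [transversePressure, aBI_eq htα, bBI_eq htα, aBI', bBI', aBI'', bBI'']
  field_simp
  ring

theorem axialPressure_bianchiI (ht : t < α) : axialPressure (bBI α) (bBI' α) (bBI'' α) t = 0 := by
  have hc := (cbrtSub_pos ht).ne'
  rw [axialPressure, bBI_eq ht, bBI', bBI'']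
  field_simp
  ring

theorem energyDensity_bianchiI (htα : t < α) (htβ : t < β) :
    energyDensity (aBI α β) (bBI α) (aBI' α β) (bBI' α) t = 4 / (3 * (α - t) * (β - t)) := by
  have hc := (cbrtSub_pos htα).ne'
  have hw := (sub_pos.2 htβ).ne'
  rw [energyDensity, aBI_eq htα, bBI_eq htα, aBI', bBI', ← cbrtSub_cube htα]
  field_simp
  ring

end ScaleFactors

theorem bianchiI_is_dust_solution_general (α β : ℝ) :
    ∃ ρ : Pt → ℝ, ∀ x : Pt, 0 ≤ x 0 → x 0 < min α β → 0 < x 1 →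
      0 ≤ ρ x ∧ einstein (gBianchiI α β) x = ρ x • Matrix.vecMulVec uCov uCov := by
  refine ⟨fun x => energyDensity (aBI α β) (bBI α) (aBI' α β) (bBI' α) (x 0),
    fun x _ ht hr => ?_⟩
  obtain ⟨htα, htβ⟩ := lt_min_iff.1 ht
  have hb := isScaleFactorOn_bBI.mono (Set.Iio_subset_Iio (min_le_left α β))
  constructor
  · have := sub_pos.2 htα
    have := sub_pos.2 htβ
    simp only [energyDensity_bianchiI htα htβ]
    positivity
  · rw [gBianchiI_eq]
    exact einstein_bianchiIMetric_eq_dust isOpen_Iio isScaleFactorOn_aBI hb ⟨ht, hr⟩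
      (transversePressure_bianchiI htα htβ) (axialPressure_bianchiI htα)

/-- The Bianchi I metric with `a(t) = (α-t)^{-1/3}(β-t)`, `b(t) = (α-t)^{2/3}`
is a solution of the Einstein equations with dust source: its Einstein tensor
satisfies `G_{ab} = ρ u_a u_b` for some nonnegative function `ρ` on the region
`0 ≤ t < min{α,β}` (with `r > 0` for validity of cylindrical coordinates),
where `u = ∂_t`. -/
theorem bianchiI_is_dust_solution (α β : ℝ) (hα : 0 < α) (hβ : 0 < β) :
    ∃ ρ : Pt → ℝ, ∀ x : Pt, 0 ≤ x 0 → x 0 < min α β → 0 < x 1 →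
      0 ≤ ρ x ∧ einstein (gBianchiI α β) x = ρ x • Matrix.vecMulVec uCov uCov :=
  bianchiI_is_dust_solution_general α β

end BianchiIDust

end
end

section
/- The function R(T,ρ) = (r₀/2)(α+ρ₀-T-ρ)^{4/3} - (3/10)(α+ρ₀-T-ρ)^{5/3} + (r₀/2)(α-ρ₀-T+ρ)^{4/3} + (3/10)(α-ρ₀-T+ρ)^{5/3} satisfies the wave equation R_{,TT} - R_{,ρρ} = 0, and on the hypersurface ρ = ρ₀ satisfies R = r₀(α-T)^{4/3} and R_{,ρ} = (α-T)^{2/3}. -/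
/-!
With `u = α + ρ₀ - T - ρ` and `v = α - ρ₀ - T + ρ`, `R` is d'Alembert's sum `f u + g v` of a
left- and a right-moving wave, where `f, g` are combinations of `y ^ (4/3)` and `y ^ (5/3)`.
Such a sum satisfies `R_{,TT} = f'' u + g'' v = R_{,ρρ}` wherever `f` and `g` are twice
differentiable, here wherever `u, v ≠ 0`. On `ρ = ρ₀` both `u` and `v` equal `α - T`: the
`5/3`-terms of `R` cancel, and so do the `4/3`-terms of `R_{,ρ} = g' v - f' u`.
-/

open Real

noncomputable section

/-- Partial derivative with respect to the first coordinate `T`. -/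
def pdT (f : ℝ × ℝ → ℝ) (p : ℝ × ℝ) : ℝ := fderiv ℝ f p (1, 0)

/-- Partial derivative with respect to the second coordinate `ρ`. -/
def pdρ (f : ℝ × ℝ → ℝ) (p : ℝ × ℝ) : ℝ := fderiv ℝ f p (0, 1)

open Filter Topology ContinuousLinearMap

def dAlembert (f g : ℝ → ℝ) (c₁ c₂ : ℝ) : ℝ × ℝ → ℝ :=
  fun q => f (c₁ - q.1 - q.2) + g (c₂ - q.1 + q.2)

section dAlembert

variable {f g f' g' : ℝ → ℝ} {a b c₁ c₂ : ℝ} {p : ℝ × ℝ}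

lemma hasFDerivAt_dAlembert (hf : HasDerivAt f a (c₁ - p.1 - p.2))
    (hg : HasDerivAt g b (c₂ - p.1 + p.2)) :
    HasFDerivAt (dAlembert f g c₁ c₂)
      (a • (-fst ℝ ℝ ℝ - snd ℝ ℝ ℝ) + b • (-fst ℝ ℝ ℝ + snd ℝ ℝ ℝ)) p := by
  have hu : HasFDerivAt (fun q : ℝ × ℝ => c₁ - q.1 - q.2) (-fst ℝ ℝ ℝ - snd ℝ ℝ ℝ) p := by
    simpa using ((hasFDerivAt_const c₁ p).fun_sub hasFDerivAt_fst).fun_sub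
      (hasFDerivAt_snd (𝕜 := ℝ) (E := ℝ) (F := ℝ) (p := p))
  have hv : HasFDerivAt (fun q : ℝ × ℝ => c₂ - q.1 + q.2) (-fst ℝ ℝ ℝ + snd ℝ ℝ ℝ) p := by
    simpa using ((hasFDerivAt_const c₂ p).fun_sub hasFDerivAt_fst).fun_add
      (hasFDerivAt_snd (𝕜 := ℝ) (E := ℝ) (F := ℝ) (p := p))
  exact (hf.comp_hasFDerivAt p hu).add (hg.comp_hasFDerivAt p hv)

lemma pdT_dAlembert (hf : HasDerivAt f a (c₁ - p.1 - p.2))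
    (hg : HasDerivAt g b (c₂ - p.1 + p.2)) :
    pdT (dAlembert f g c₁ c₂) p = -a - b := by
  simp [pdT, (hasFDerivAt_dAlembert hf hg).fderiv, sub_eq_add_neg]

lemma pdρ_dAlembert (hf : HasDerivAt f a (c₁ - p.1 - p.2))
    (hg : HasDerivAt g b (c₂ - p.1 + p.2)) :
    pdρ (dAlembert f g c₁ c₂) p = -a + b := by
  simp [pdρ, (hasFDerivAt_dAlembert hf hg).fderiv]

theorem pdT_pdT_dAlembert_eq_pdρ_pdρ
    (hf : ∀ᶠ x in 𝓝 (c₁ - p.1 - p.2), HasDerivAt f (f' x) x)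
    (hg : ∀ᶠ x in 𝓝 (c₂ - p.1 + p.2), HasDerivAt g (g' x) x)
    (hf' : HasDerivAt f' a (c₁ - p.1 - p.2)) (hg' : HasDerivAt g' b (c₂ - p.1 + p.2)) :
    pdT (pdT (dAlembert f g c₁ c₂)) p = pdρ (pdρ (dAlembert f g c₁ c₂)) p := by
  have hfg : ∀ᶠ q in 𝓝 p, HasDerivAt f (f' (c₁ - q.1 - q.2)) (c₁ - q.1 - q.2) ∧
      HasDerivAt g (g' (c₂ - q.1 + q.2)) (c₂ - q.1 + q.2) :=
    (((continuous_const.sub continuous_fst).sub continuous_snd).tendsto p).eventually hf |>.and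
      ((((continuous_const.sub continuous_fst).add continuous_snd).tendsto p).eventually hg)
  have hT : pdT (dAlembert f g c₁ c₂) =ᶠ[𝓝 p] dAlembert (-f') (-g') c₁ c₂ := by
    filter_upwards [hfg] with q ⟨hfq, hgq⟩
    rw [pdT_dAlembert hfq hgq, dAlembert, Pi.neg_apply, Pi.neg_apply, sub_eq_add_neg]
  have hρ : pdρ (dAlembert f g c₁ c₂) =ᶠ[𝓝 p] dAlembert (-f') g' c₁ c₂ := by
    filter_upwards [hfg] with q ⟨hfq, hgq⟩
    rw [pdρ_dAlembert hfq hgq, dAlembert, Pi.neg_apply]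
  calc pdT (pdT (dAlembert f g c₁ c₂)) p = pdT (dAlembert (-f') (-g') c₁ c₂) p := by
        rw [pdT, pdT, hT.fderiv_eq]
    _ = a + b := by rw [pdT_dAlembert hf'.neg hg'.neg]; ring
    _ = pdρ (dAlembert (-f') g' c₁ c₂) p := by rw [pdρ_dAlembert hf'.neg hg']; ring
    _ = pdρ (pdρ (dAlembert f g c₁ c₂)) p := by rw [pdρ, pdρ, hρ.fderiv_eq]

end dAlembert

lemma hasDerivAt_const_mul_rpow_add_const_mul_rpow {k₁ k₂ e₁ e₂ x : ℝ}
    (h₁ : x ≠ 0 ∨ 1 ≤ e₁) (h₂ : x ≠ 0 ∨ 1 ≤ e₂) :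
    HasDerivAt (fun y => k₁ * y ^ e₁ + k₂ * y ^ e₂)
      (k₁ * e₁ * x ^ (e₁ - 1) + k₂ * e₂ * x ^ (e₂ - 1)) x := by
  simpa only [mul_assoc] using
    ((hasDerivAt_rpow_const h₁).const_mul k₁).fun_add ((hasDerivAt_rpow_const h₂).const_mul k₂)

/-- The FLRW exterior areal function
`R(T,ρ) = (r₀/2)(α+ρ₀-T-ρ)^{4/3} - (3/10)(α+ρ₀-T-ρ)^{5/3}
  + (r₀/2)(α-ρ₀-T+ρ)^{4/3} + (3/10)(α-ρ₀-T+ρ)^{5/3}`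
satisfies the wave equation `R_{,TT} - R_{,ρρ} = 0` on the domain where
`α+ρ₀-T-ρ > 0` and `α-ρ₀-T+ρ > 0`, and on the hypersurface `ρ = ρ₀` it
satisfies `R = r₀(α-T)^{4/3}` and `R_{,ρ} = (α-T)^{2/3}`. -/
theorem flrw_exterior_areal_function (α ρ₀ r₀ : ℝ) :
    let R : ℝ × ℝ → ℝ := fun p =>
      r₀ / 2 * (α + ρ₀ - p.1 - p.2) ^ ((4 : ℝ) / 3)
        - 3 / 10 * (α + ρ₀ - p.1 - p.2) ^ ((5 : ℝ) / 3)
        + r₀ / 2 * (α - ρ₀ - p.1 + p.2) ^ ((4 : ℝ) / 3)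
        + 3 / 10 * (α - ρ₀ - p.1 + p.2) ^ ((5 : ℝ) / 3)
    (∀ p : ℝ × ℝ, 0 < α + ρ₀ - p.1 - p.2 → 0 < α - ρ₀ - p.1 + p.2 →
        pdT (pdT R) p - pdρ (pdρ R) p = 0) ∧
    (∀ T : ℝ, T < α →
        R (T, ρ₀) = r₀ * (α - T) ^ ((4 : ℝ) / 3) ∧
        pdρ R (T, ρ₀) = (α - T) ^ ((2 : ℝ) / 3)) := by
  intro R
  set f : ℝ → ℝ := fun y => r₀ / 2 * y ^ ((4 : ℝ) / 3) + -(3 / 10) * y ^ ((5 : ℝ) / 3)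
  set g : ℝ → ℝ := fun y => r₀ / 2 * y ^ ((4 : ℝ) / 3) + 3 / 10 * y ^ ((5 : ℝ) / 3)
  have hR : R = dAlembert f g (α + ρ₀) (α - ρ₀) := by
    funext q
    simp only [R, f, g, dAlembert]
    ring
  have hf (x : ℝ) : HasDerivAt f _ x :=
    hasDerivAt_const_mul_rpow_add_const_mul_rpow (by norm_num) (by norm_num)
  have hg (x : ℝ) : HasDerivAt g _ x :=
    hasDerivAt_const_mul_rpow_add_const_mul_rpow (by norm_num) (by norm_num)
  refine ⟨fun p hu hv => ?_, fun T _ => ⟨?_, ?_⟩⟩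
  · rw [hR, sub_eq_zero]
    exact pdT_pdT_dAlembert_eq_pdρ_pdρ (.of_forall hf) (.of_forall hg)
      (hasDerivAt_const_mul_rpow_add_const_mul_rpow (.inl hu.ne') (.inl hu.ne'))
      (hasDerivAt_const_mul_rpow_add_const_mul_rpow (.inl hv.ne') (.inl hv.ne'))
  · simp only [R, show α + ρ₀ - T - ρ₀ = α - T by ring, show α - ρ₀ - T + ρ₀ = α - T by ring]
    ring
  · rw [hR, pdρ_dAlembert (hf _) (hg _)]
    simp only [show α + ρ₀ - T - ρ₀ = α - T by ring, show α - ρ₀ - T + ρ₀ = α - T by ring]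
    rw [show (5 : ℝ) / 3 - 1 = 2 / 3 by norm_num]
    ring

end
end

section
/- For α > 0, define r* = (α/2)√(1 - 1/√3). Then for 0 < r < r* the function f(r) = (α² - 2r(2r + √(α² - 2r²)))/(r²(2r² - α²)) is negative, and for r* < r < α/√3 it is positive; r* is the unique zero of g(r) = α² - 2r(2r + √(α² - 2r²)) on (0, α/√2). -/
open Real

set_option maxHeartbeats 1600000 in
/-- Sign analysis of the gravitational flux 1-form
`f(r) = (α² - 2r(2r + √(α² - 2r²)))/(r²(2r² - α²))` on the marginally trapped
cylinders of the Szekeres collapse interior: with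
`r* = (α/2)√(1 - 1/√3)`, the flux is negative (incoming) for `0 < r < r*`,
positive (outgoing) for `r* < r < α/√3`, and `r*` is the unique zero of the
numerator `g(r) = α² - 2r(2r + √(α² - 2r²))` on `(0, α/√2)`. -/
theorem szekeres_flux_sign_analysis (α : ℝ) (hα : 0 < α) :
    let rstar : ℝ := α / 2 * Real.sqrt (1 - 1 / Real.sqrt 3)
    let f : ℝ → ℝ := fun r =>
      (α ^ 2 - 2 * r * (2 * r + Real.sqrt (α ^ 2 - 2 * r ^ 2))) / (r ^ 2 * (2 * r ^ 2 - α ^ 2))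
    let g : ℝ → ℝ := fun r => α ^ 2 - 2 * r * (2 * r + Real.sqrt (α ^ 2 - 2 * r ^ 2))
    (∀ r, 0 < r → r < rstar → f r < 0) ∧
    (∀ r, rstar < r → r < α / Real.sqrt 3 → 0 < f r) ∧
    (∀ r, 0 < r → r < α / Real.sqrt 2 → (g r = 0 ↔ r = rstar)) := by
  intro rstar f g
  have hs0 : (0:ℝ) ≤ Real.sqrt 3 := Real.sqrt_nonneg 3
  have hs : Real.sqrt 3 ^ 2 = 3 := Real.sq_sqrt (by norm_num)
  have hs1 : 1 < Real.sqrt 3 := by nlinarith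
  have hs2 : Real.sqrt 3 < 2 := by nlinarith
  have h1s : (0:ℝ) < 1 - 1 / Real.sqrt 3 := by
    rw [sub_pos, div_lt_one (by linarith)]; linarith
  have hrstar_pos : 0 < rstar :=
    mul_pos (by linarith) (Real.sqrt_pos.mpr h1s)
  have hrsq : rstar ^ 2 = α ^ 2 * (3 - Real.sqrt 3) / 12 := by
    have h1 : rstar ^ 2 = (α / 2) ^ 2 * (1 - 1 / Real.sqrt 3) := by
      show (α / 2 * Real.sqrt (1 - 1 / Real.sqrt 3)) ^ 2 = _
      rw [mul_pow, Real.sq_sqrt h1s.le]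
    rw [h1]
    have hsne : Real.sqrt 3 ≠ 0 := by linarith
    field_simp
    nlinarith
  refine ⟨?_, ?_, ?_⟩
  · -- incoming: 0 < r < rstar ⇒ f r < 0
    intro r hr0 hrlt
    have hx : r ^ 2 < α ^ 2 * (3 - Real.sqrt 3) / 12 := by nlinarith
    have hw2 : Real.sqrt (α ^ 2 - 2 * r ^ 2) ^ 2 = α ^ 2 - 2 * r ^ 2 :=
      Real.sq_sqrt (by nlinarith)
    set w := Real.sqrt (α ^ 2 - 2 * r ^ 2) with hwdef
    have hw0 : 0 ≤ w := Real.sqrt_nonneg _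
    have hA : 0 < α ^ 2 - 4 * r ^ 2 := by nlinarith
    have hww : (2 * r * w) ^ 2 = 4 * r ^ 2 * (α ^ 2 - 2 * r ^ 2) := by
      linear_combination 4 * r ^ 2 * hw2
    have hP : (2 * r * w) ^ 2 < (α ^ 2 - 4 * r ^ 2) ^ 2 := by
      have h1 : 0 < α ^ 2 * (3 - Real.sqrt 3) / 12 - r ^ 2 := by linarith
      have h2 : 0 < α ^ 2 * (3 + Real.sqrt 3) / 12 - r ^ 2 := by nlinarith
      rw [hww]
      nlinarith [mul_pos h1 h2]
    have hlt : 2 * r * w < α ^ 2 - 4 * r ^ 2 := lt_of_pow_lt_pow_left₀ 2 hA.le hP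
    have hnum : 0 < α ^ 2 - 2 * r * (2 * r + w) := by nlinarith
    have hden : r ^ 2 * (2 * r ^ 2 - α ^ 2) < 0 :=
      mul_neg_of_pos_of_neg (pow_pos hr0 2) (by nlinarith)
    exact div_neg_of_pos_of_neg hnum hden
  · -- outgoing: rstar < r < α/√3 ⇒ 0 < f r
    intro r hr1 hr2
    have hr0 : 0 < r := hrstar_pos.trans hr1
    have hx1 : α ^ 2 * (3 - Real.sqrt 3) / 12 < r ^ 2 := by nlinarith
    rw [lt_div_iff₀ (by positivity : (0:ℝ) < Real.sqrt 3)] at hr2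
    have hx2 : r ^ 2 < α ^ 2 / 3 := by
      have h4 : (r * Real.sqrt 3) ^ 2 = 3 * r ^ 2 := by
        rw [mul_pow, hs]; ring
      have h5 : (r * Real.sqrt 3) ^ 2 < α ^ 2 :=
        sq_lt_sq' (by nlinarith [mul_nonneg hr0.le hs0] : -α < r * Real.sqrt 3) hr2
      rw [h4] at h5; linarith
    have hw2 : Real.sqrt (α ^ 2 - 2 * r ^ 2) ^ 2 = α ^ 2 - 2 * r ^ 2 :=
      Real.sq_sqrt (by nlinarith)
    set w := Real.sqrt (α ^ 2 - 2 * r ^ 2) with hwdef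
    have hw0 : 0 ≤ w := Real.sqrt_nonneg _
    have hwpos : 0 < w := Real.sqrt_pos.mpr (by nlinarith)
    have hnum : α ^ 2 - 2 * r * (2 * r + w) < 0 := by
      rcases le_or_gt (α ^ 2) (4 * r ^ 2) with h | h
      · nlinarith [mul_pos hr0 hwpos]
      · have hww : (2 * r * w) ^ 2 = 4 * r ^ 2 * (α ^ 2 - 2 * r ^ 2) := by
          linear_combination 4 * r ^ 2 * hw2
        have hP : (α ^ 2 - 4 * r ^ 2) ^ 2 < (2 * r * w) ^ 2 := by
          have h1 : 0 < r ^ 2 - α ^ 2 * (3 - Real.sqrt 3) / 12 := by linarith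
          have h2 : 0 < α ^ 2 * (3 + Real.sqrt 3) / 12 - r ^ 2 := by nlinarith
          rw [hww]
          nlinarith [mul_pos h1 h2]
        have hlt : α ^ 2 - 4 * r ^ 2 < 2 * r * w :=
          lt_of_pow_lt_pow_left₀ 2 (by positivity) hP
        nlinarith
    have hden : r ^ 2 * (2 * r ^ 2 - α ^ 2) < 0 :=
      mul_neg_of_pos_of_neg (pow_pos hr0 2) (by nlinarith)
    exact div_pos_of_neg_of_neg hnum hden
  · -- uniqueness of the zero on (0, α/√2)
    intro r hr0 hr2
    have hsqrt2 : Real.sqrt 2 ^ 2 = 2 := Real.sq_sqrt (by norm_num)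
    have hsqrt2pos : (0:ℝ) < Real.sqrt 2 := Real.sqrt_pos.mpr (by norm_num)
    rw [lt_div_iff₀ hsqrt2pos] at hr2
    have hx2 : 2 * r ^ 2 < α ^ 2 := by
      have h4 : (r * Real.sqrt 2) ^ 2 = 2 * r ^ 2 := by
        rw [mul_pow, hsqrt2]; ring
      have h5 : (r * Real.sqrt 2) ^ 2 < α ^ 2 :=
        sq_lt_sq' (by nlinarith [mul_nonneg hr0.le hsqrt2pos.le] : -α < r * Real.sqrt 2) hr2
      rw [h4] at h5; linarith
    have hw2 : Real.sqrt (α ^ 2 - 2 * r ^ 2) ^ 2 = α ^ 2 - 2 * r ^ 2 :=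
      Real.sq_sqrt (by nlinarith)
    set w := Real.sqrt (α ^ 2 - 2 * r ^ 2) with hwdef
    have hw0 : 0 ≤ w := Real.sqrt_nonneg _
    have hwpos : 0 < w := Real.sqrt_pos.mpr (by nlinarith)
    constructor
    · intro hg
      have hg' : α ^ 2 - 2 * r * (2 * r + w) = 0 := hg
      have he : α ^ 2 - 4 * r ^ 2 = 2 * r * w := by linear_combination hg'
      have hA : 0 ≤ α ^ 2 - 4 * r ^ 2 := by
        rw [he]; positivity
      have hPeq : 24 * (r ^ 2) ^ 2 - 12 * α ^ 2 * r ^ 2 + α ^ 4 = 0 := by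
        linear_combination (α ^ 2 - 4 * r ^ 2 + 2 * r * w) * he + 4 * r ^ 2 * hw2
      have hfac : (r ^ 2 - α ^ 2 * (3 - Real.sqrt 3) / 12) *
          (24 * (r ^ 2 - α ^ 2 * (3 + Real.sqrt 3) / 12)) = 0 := by
        linear_combination hPeq - (α ^ 4 / 6) * hs
      have hx_eq : r ^ 2 = α ^ 2 * (3 - Real.sqrt 3) / 12 := by
        rcases mul_eq_zero.mp hfac with h | h
        · linarith
        · exfalso; nlinarith
      have hr2star : r ^ 2 = rstar ^ 2 := by rw [hrsq]; exact hx_eq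
      have hfac2 : (r - rstar) * (r + rstar) = 0 := by linear_combination hr2star
      rcases mul_eq_zero.mp hfac2 with h | h
      · linarith
      · exfalso; nlinarith
    · intro hre
      have hx : r ^ 2 = α ^ 2 * (3 - Real.sqrt 3) / 12 := by rw [hre, hrsq]
      show α ^ 2 - 2 * r * (2 * r + w) = 0
      have hA : 0 < α ^ 2 - 4 * r ^ 2 := by nlinarith
      have hsq : (2 * r * w) ^ 2 = (α ^ 2 - 4 * r ^ 2) ^ 2 := by
        linear_combination 4 * r ^ 2 * hw2 -
          24 * (r ^ 2 - α ^ 2 * (3 + Real.sqrt 3) / 12) * hx - (α ^ 4 / 6) * hs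
      have hfac : (2 * r * w - (α ^ 2 - 4 * r ^ 2)) *
          (2 * r * w + (α ^ 2 - 4 * r ^ 2)) = 0 := by linear_combination hsq
      rcases mul_eq_zero.mp hfac with h | h
      · linear_combination -h
      · exfalso; nlinarith [mul_nonneg (mul_nonneg (by norm_num : (0:ℝ) ≤ 2) hr0.le) hw0]
end

section
/- For α > 0, h > 0, r₀ ∈ (0, α/√2), the integral of S⁻_t = (2(α² - 4r²)/(α²√(α² - 2r²))) dr∧dz∧dφ over the region {0 ≤ r ≤ r₀} × [0,h] × [0,2π] equals (4πh r₀ √(α² - 2r₀²))/α², and this value is positive. -/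
open Real intervalIntegral

theorem hasDerivAt_mul_sqrt_sub_mul_sq {a b x : ℝ} (hx : 0 < a - b * x ^ 2) :
    HasDerivAt (fun y => y * √(a - b * y ^ 2)) ((a - 2 * b * x ^ 2) / √(a - b * x ^ 2)) x := by
  have hinner : HasDerivAt (fun y => a - b * y ^ 2) (-(b * (2 * x))) x := by
    simpa using ((hasDerivAt_pow 2 x).const_mul b).const_sub a
  have hprod := (hasDerivAt_id x).mul ((hasDerivAt_sqrt hx.ne').comp x hinner)
  refine hprod.congr_deriv ?_
  have hsqrt_sq : √(a - b * x ^ 2) ^ 2 = a - b * x ^ 2 := sq_sqrt hx.le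
  have hsqrt_ne : √(a - b * x ^ 2) ≠ 0 := (sqrt_pos.mpr hx).ne'
  simp only [id, Function.comp_apply]
  field_simp
  linear_combination hsqrt_sq

/-- `x ↦ x √(a - b x²)` is an antiderivative of the integrand as long as the radicand stays
positive, which for `0 ≤ b` only has to be checked at the endpoint `r₀`. -/
theorem integral_sub_two_mul_sq_div_sqrt {a b r₀ : ℝ} (hb : 0 ≤ b) (hr₀ : 0 < a - b * r₀ ^ 2) :
    ∫ x in (0 : ℝ)..r₀, (a - 2 * b * x ^ 2) / √(a - b * x ^ 2) = r₀ * √(a - b * r₀ ^ 2) := by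
  have hpos : ∀ x ∈ Set.uIcc (0 : ℝ) r₀, 0 < a - b * x ^ 2 := by
    intro x hx
    have hx_sq : x ^ 2 ≤ r₀ ^ 2 := sq_le_sq.mpr (by simpa using Set.abs_sub_left_of_mem_uIcc hx)
    nlinarith [mul_le_mul_of_nonneg_left hx_sq hb]
  have hcont : ContinuousOn (fun x => (a - 2 * b * x ^ 2) / √(a - b * x ^ 2)) (Set.uIcc 0 r₀) :=
    ContinuousOn.div (by fun_prop) (by fun_prop) fun x hx => (sqrt_pos.mpr (hpos x hx)).ne'
  simpa using integral_eq_sub_of_hasDerivAt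
    (fun x hx => hasDerivAt_mul_sqrt_sub_mul_sq (hpos x hx)) hcont.intervalIntegrable

theorem two_mul_sq_lt_sq_of_lt_div_sqrt_two {r a : ℝ} (hr : 0 ≤ r) (h : r < a / √2) :
    2 * r ^ 2 < a ^ 2 := by
  have hlt : r * √2 < a := (lt_div_iff₀ (by positivity)).mp h
  calc 2 * r ^ 2 = (r * √2) ^ 2 := by rw [mul_pow, sq_sqrt zero_le_two, mul_comm]
    _ < a ^ 2 := pow_lt_pow_left₀ hlt (by positivity) two_ne_zero

/-- Time component of the gravitational energy-momentum flux through the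
marginally trapped tube in the Szekeres interior model:
`2πh ∫₀^{r₀} 2(α² - 4r²)/(α²√(α² - 2r²)) dr = 4πh r₀ √(α² - 2r₀²)/α²`,
and this value is positive. -/
theorem szekeres_trapped_flux_time (α h r₀ : ℝ)
    (hα : 0 < α) (hh : 0 < h) (hr₀ : 0 < r₀) (hr₀' : r₀ < α / Real.sqrt 2) :
    2 * π * h * ∫ r in (0:ℝ)..r₀,
        2 * (α ^ 2 - 4 * r ^ 2) / (α ^ 2 * Real.sqrt (α ^ 2 - 2 * r ^ 2)) =
      4 * π * h * r₀ * Real.sqrt (α ^ 2 - 2 * r₀ ^ 2) / α ^ 2 ∧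
    0 < 4 * π * h * r₀ * Real.sqrt (α ^ 2 - 2 * r₀ ^ 2) / α ^ 2 := by
  have hrad : 0 < α ^ 2 - 2 * r₀ ^ 2 :=
    sub_pos.mpr (two_mul_sq_lt_sq_of_lt_div_sqrt_two hr₀.le hr₀')
  have hintegrand : ∀ r : ℝ, 2 * (α ^ 2 - 4 * r ^ 2) / (α ^ 2 * √(α ^ 2 - 2 * r ^ 2)) =
      2 / α ^ 2 * ((α ^ 2 - 2 * 2 * r ^ 2) / √(α ^ 2 - 2 * r ^ 2)) := fun r => by
    rw [mul_div_mul_comm]; ring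
  have hsqrt_pos : 0 < √(α ^ 2 - 2 * r₀ ^ 2) := sqrt_pos.mpr hrad
  refine ⟨?_, by positivity⟩
  rw [integral_congr fun r _ => hintegrand r, integral_const_mul,
    integral_sub_two_mul_sq_div_sqrt zero_le_two hrad]
  field_simp
  ring
end
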